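/- Assume the block setup and QR setup. Then for each i ∈ {1,…,L}, the i-th column of X_j^{(G)} equals the i-th column of X_{j−1}^{(G)} if and only if the i-th column of C_j is the zero vector. Consequently, block GMRES partially stagnates at step j on a nonempty proper index set 𝕀 ⊊ {1,…,L} (meaning the columns of X_j^{(G)} indexed by 𝕀 agree with those of X_{j−1}^{(G)} while every column with index outside 𝕀 differs) if and only if C_j ≠ 0, the columns of C_j indexed by 𝕀 are zero, and the columns of C_j with indices outside 𝕀 are nonzero; in this case 0 < rank C_j ≤ L − |𝕀|. -/

import Mathlib

open Matrix

noncomputable section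

set_option maxHeartbeats 1000000

/-- Squared Frobenius norm of a complex matrix. -/
def frobSq {a b : Type*} [Fintype a] [Fintype b] (M : Matrix a b ℂ) : ℝ :=
  ∑ r, ∑ c, Complex.normSq (M r c)

/-- The four Moore–Penrose conditions. -/
def IsMoorePenrose {a b : Type*} [Fintype a] [Fintype b]
    (M : Matrix a b ℂ) (P : Matrix b a ℂ) : Prop :=
  M * P * M = M ∧ P * M * P = P ∧ (M * P)ᴴ = M * P ∧ (P * M)ᴴ = P * M

/-- The block Krylov subspace `𝕂_i(A, F)`: the span of all columns of
`F, A F, …, A^(i-1) F`. -/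
def blockKrylov {n L : ℕ} (A : Matrix (Fin n) (Fin n) ℂ)
    (F : Matrix (Fin n) (Fin L) ℂ) (i : ℕ) : Submodule ℂ (Fin n → ℂ) :=
  Submodule.span ℂ { v | ∃ k < i, ∃ c : Fin L, v = fun r => (A ^ k * F) r c }

/-- `E_L^{[mL]}` : the first `L` columns of the `mL × mL` identity matrix
(block row indexing). -/
def EL (m L : ℕ) : Matrix (Fin m × Fin L) (Fin L) ℂ :=
  Matrix.of fun r c => if (r.1 : ℕ) = 0 ∧ r.2 = c then 1 else 0

/-- An `L × L` matrix is upper triangular. -/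
def utL {L : ℕ} (M : Matrix (Fin L) (Fin L) ℂ) : Prop :=
  ∀ a b : Fin L, (b : ℕ) < (a : ℕ) → M a b = 0

/-- A block-indexed `mL × mL` matrix is upper triangular. -/
def utBig {m L : ℕ} (M : Matrix (Fin m × Fin L) (Fin m × Fin L) ℂ) : Prop :=
  ∀ r c : Fin m × Fin L, (c.1 : ℕ) * L + (c.2 : ℕ) < (r.1 : ℕ) * L + (r.2 : ℕ) → M r c = 0

/-- Stack a block-tall matrix on top of an extra block row. -/
def vcat {m L : ℕ} {col : Type*} (T : Matrix (Fin m × Fin L) col ℂ)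
    (Bo : Matrix (Fin L) col ℂ) : Matrix (Fin (m+1) × Fin L) col ℂ :=
  Matrix.of fun r cc => if h : (r.1 : ℕ) < m then T (⟨r.1, h⟩, r.2) cc else Bo r.2 cc

/-- The block matrix `[[R, Z], [0, N]]`. -/
def twoBlock {m L : ℕ} (R : Matrix (Fin m × Fin L) (Fin m × Fin L) ℂ)
    (Z : Matrix (Fin m × Fin L) (Fin L) ℂ) (N : Matrix (Fin L) (Fin L) ℂ) :
    Matrix (Fin (m+1) × Fin L) (Fin (m+1) × Fin L) ℂ :=
  Matrix.of fun r c =>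
    if hr : (r.1 : ℕ) < m then
      if hc : (c.1 : ℕ) < m then R (⟨r.1, hr⟩, r.2) (⟨c.1, hc⟩, c.2)
      else Z (⟨r.1, hr⟩, r.2) c.2
    else
      if (c.1 : ℕ) < m then 0 else N r.2 c.2

/-- The block matrix `[[R, Z], [0, Hmid], [0, Hbot]]`. -/
def threeBlock {m L : ℕ} (R : Matrix (Fin m × Fin L) (Fin m × Fin L) ℂ)
    (Z : Matrix (Fin m × Fin L) (Fin L) ℂ) (Hmid Hbot : Matrix (Fin L) (Fin L) ℂ) :
    Matrix (Fin (m+2) × Fin L) (Fin (m+1) × Fin L) ℂ :=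
  Matrix.of fun r c =>
    if hr : (r.1 : ℕ) < m then
      if hc : (c.1 : ℕ) < m then R (⟨r.1, hr⟩, r.2) (⟨c.1, hc⟩, c.2)
      else Z (⟨r.1, hr⟩, r.2) c.2
    else
      if (c.1 : ℕ) < m then 0
      else if (r.1 : ℕ) = m then Hmid r.2 c.2 else Hbot r.2 c.2

/-- `diag(Q, I_L)` : extend a block-indexed square matrix by an identity block. -/
def extendOne {m L : ℕ} (Q : Matrix (Fin m × Fin L) (Fin m × Fin L) ℂ) :
    Matrix (Fin (m+1) × Fin L) (Fin (m+1) × Fin L) ℂ :=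
  Matrix.of fun r c =>
    if hr : (r.1 : ℕ) < m then
      if hc : (c.1 : ℕ) < m then Q (⟨r.1, hr⟩, r.2) (⟨c.1, hc⟩, c.2) else 0
    else
      if (c.1 : ℕ) < m then 0 else if r.2 = c.2 then 1 else 0

/-- `diag(I_{mL}, Q)` : an identity block, then `Q` in the bottom right corner. -/
def extendBot {m L : ℕ} (Q : Matrix (Fin L) (Fin L) ℂ) :
    Matrix (Fin (m+1) × Fin L) (Fin (m+1) × Fin L) ℂ :=
  Matrix.of fun r c =>
    if (r.1 : ℕ) < m ∨ (c.1 : ℕ) < m then (if r = c then 1 else 0)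
    else Q r.2 c.2

/-- The `(m+2)L × (m+2)L` matrix which is the identity outside of its trailing
principal `2L × 2L` block, which is `[[Q11, Q12], [Q21, Q22]]`. -/
def trailingTwo {m L : ℕ} (Q11 Q12 Q21 Q22 : Matrix (Fin L) (Fin L) ℂ) :
    Matrix (Fin (m+2) × Fin L) (Fin (m+2) × Fin L) ℂ :=
  Matrix.of fun r c =>
    if (r.1 : ℕ) < m ∨ (c.1 : ℕ) < m then (if r = c then 1 else 0)
    else if (r.1 : ℕ) = m then
      (if (c.1 : ℕ) = m then Q11 r.2 c.2 else Q12 r.2 c.2)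
    else
      (if (c.1 : ℕ) = m then Q21 r.2 c.2 else Q22 r.2 c.2)

/-- The block matrix `[R ; 0]` (one extra zero block row below `R`). -/
def stackZero {m L : ℕ} (R : Matrix (Fin m × Fin L) (Fin m × Fin L) ℂ) :
    Matrix (Fin (m+1) × Fin L) (Fin m × Fin L) ℂ :=
  Matrix.of fun r c => if h : (r.1 : ℕ) < m then R (⟨r.1, h⟩, r.2) c else 0

/-- A breakdown-free block Arnoldi decomposition of length `j = p + 1` for the block
linear system `A X = B` with initial guess `X₀` (block size `L`). -/
structure BlockArnoldi (n L p : ℕ) : Type where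
  A : Matrix (Fin n) (Fin n) ℂ
  B : Matrix (Fin n) (Fin L) ℂ
  X0 : Matrix (Fin n) (Fin L) ℂ
  W : Matrix (Fin n) (Fin (p+2) × Fin L) ℂ
  S0 : Matrix (Fin L) (Fin L) ℂ
  Hbar : Matrix (Fin (p+2) × Fin L) (Fin (p+1) × Fin L) ℂ
  hL : 1 ≤ L
  hn : (p+2) * L ≤ n
  F0_rank : (B - A * X0).rank = L
  orth : Wᴴ * W = 1
  S0_ut : utL S0
  S0_inv : IsUnit S0
  F0_eq : B - A * X0 = (W.submatrix id fun c : Fin L => ((0 : Fin (p+2)), c)) * S0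
  span : ∀ i : ℕ, i ≤ p + 2 →
    blockKrylov A (B - A * X0) i =
      Submodule.span ℂ { v | ∃ c : Fin (p+2) × Fin L, (c.1 : ℕ) < i ∧ v = fun r => W r c }
  arnoldi : A * W.submatrix id (Prod.map Fin.castSucc id) = W * Hbar
  hess : ∀ r c, (c.1 : ℕ) + 1 < (r.1 : ℕ) → Hbar r c = 0
  sub_ut : ∀ (k : Fin (p+1)) (a b : Fin L), (b : ℕ) < (a : ℕ) → Hbar (k.succ, a) (k, b) = 0
  sub_inv : ∀ k : Fin (p+1), IsUnit (Matrix.of fun a b : Fin L => Hbar (k.succ, a) (k, b))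

namespace BlockArnoldi

variable {n L p : ℕ}

/-- `H̄_{j-1}`, the leading `jL × (j-1)L` submatrix of `H̄_j`. -/
def Hprev (D : BlockArnoldi n L p) : Matrix (Fin (p+1) × Fin L) (Fin p × Fin L) ℂ :=
  D.Hbar.submatrix (Prod.map Fin.castSucc id) (Prod.map Fin.castSucc id)

/-- `H_j`, the leading `jL × jL` submatrix of `H̄_j`. -/
def Hsq (D : BlockArnoldi n L p) : Matrix (Fin (p+1) × Fin L) (Fin (p+1) × Fin L) ℂ :=
  D.Hbar.submatrix (Prod.map Fin.castSucc id) id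

/-- `W_j = [V₁ … V_j]`. -/
def Wfull (D : BlockArnoldi n L p) : Matrix (Fin n) (Fin (p+1) × Fin L) ℂ :=
  D.W.submatrix id (Prod.map Fin.castSucc id)

/-- `W_{j-1} = [V₁ … V_{j-1}]`. -/
def Wprev (D : BlockArnoldi n L p) : Matrix (Fin n) (Fin p × Fin L) ℂ :=
  D.W.submatrix id (Prod.map (fun i : Fin p => (i.castSucc.castSucc : Fin (p+2))) id)

/-- `V_j`, the `j`-th block Arnoldi vector. -/
def Vj (D : BlockArnoldi n L p) : Matrix (Fin n) (Fin L) ℂ :=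
  D.W.submatrix id fun c : Fin L => (((Fin.last p).castSucc : Fin (p+2)), c)

end BlockArnoldi

/-- `Y` is the unique minimizer of `‖Hb • Y' - T‖_F` over all `Y'`. -/
def IsUniqueFrobMin {a b c : Type*} [Fintype a] [Fintype b] [Fintype c]
    (Hb : Matrix a b ℂ) (T : Matrix a c ℂ) (Y : Matrix b c ℂ) : Prop :=
  (∀ Y', frobSq (Hb * Y - T) ≤ frobSq (Hb * Y' - T)) ∧
  ∀ Y', (∀ Y'', frobSq (Hb * Y' - T) ≤ frobSq (Hb * Y'' - T)) → Y' = Y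

/-- `Y_j^{(G)}` is the solution of the `j`-th block GMRES least-squares subproblem. -/
def IsBlockGMRESj {n L p : ℕ} (D : BlockArnoldi n L p)
    (Y : Matrix (Fin (p+1) × Fin L) (Fin L) ℂ) : Prop :=
  IsUniqueFrobMin D.Hbar (EL (p+2) L * D.S0) Y

/-- `Y_{j-1}^{(G)}` is the solution of the `(j-1)`-st block GMRES least-squares
subproblem. -/
def IsBlockGMRESprev {n L p : ℕ} (D : BlockArnoldi n L p)
    (Y : Matrix (Fin p × Fin L) (Fin L) ℂ) : Prop :=
  IsUniqueFrobMin D.Hprev (EL (p+1) L * D.S0) Y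

/-- The QR setup at step `j = p+1` : a QR factorization `Q̄_{j-1} H̄_{j-1} = [R_{j-1}; 0]`
from the previous step, the induced splitting
`diag(Q̄_{j-1}, I_L)·H̄_j = [[R,Z],[0,Ĥ_{jj}],[0,H_{j+1,j}]]`, the unitary `Q_j`
(identity outside its trailing principal `2L×2L` block) completing the
QR factorization of `H̄_j`, and the unitary `Q̂_j^{(b)}` triangularizing `Ĥ_{jj}`. -/
structure QRSetup (L p : ℕ) (Hbar : Matrix (Fin (p+2) × Fin L) (Fin (p+1) × Fin L) ℂ)
    (S0 : Matrix (Fin L) (Fin L) ℂ) : Type where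
  Qbar : Matrix (Fin (p+1) × Fin L) (Fin (p+1) × Fin L) ℂ
  R : Matrix (Fin p × Fin L) (Fin p × Fin L) ℂ
  Z : Matrix (Fin p × Fin L) (Fin L) ℂ
  Hhat : Matrix (Fin L) (Fin L) ℂ
  Hsub : Matrix (Fin L) (Fin L) ℂ
  Q11 : Matrix (Fin L) (Fin L) ℂ
  Q12 : Matrix (Fin L) (Fin L) ℂ
  Q21 : Matrix (Fin L) (Fin L) ℂ
  Q22 : Matrix (Fin L) (Fin L) ℂ
  N : Matrix (Fin L) (Fin L) ℂ
  Qhatb : Matrix (Fin L) (Fin L) ℂ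
  Nhat : Matrix (Fin L) (Fin L) ℂ
  Qbar_unit : Qbarᴴ * Qbar = 1
  Qbar_base : p = 0 → Qbar = 1
  R_ut : utBig R
  R_inv : IsUnit R
  qr_prev : Qbar * Hbar.submatrix (Prod.map Fin.castSucc id) (Prod.map Fin.castSucc id)
      = stackZero R
  qr_split : extendOne Qbar * Hbar = threeBlock R Z Hhat Hsub
  Qj_unit : (trailingTwo (m := p) Q11 Q12 Q21 Q22)ᴴ * trailingTwo (m := p) Q11 Q12 Q21 Q22 = 1
  qr_full : trailingTwo (m := p) Q11 Q12 Q21 Q22 * (extendOne Qbar * Hbar)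
      = threeBlock R Z N 0
  N_ut : utL N
  N_inv : IsUnit N
  Qhatb_unit : Qhatbᴴ * Qhatb = 1
  Nhat_def : Nhat = Qhatb * Hhat
  Nhat_ut : utL Nhat

namespace QRSetup

variable {L p : ℕ} {Hbar : Matrix (Fin (p+2) × Fin L) (Fin (p+1) × Fin L) ℂ}
  {S0 : Matrix (Fin L) (Fin L) ℂ}

/-- `C̃_j` : the last `L` rows of `Q̄_{j-1} E_L^{[jL]} S₀`. -/
def Ct (S : QRSetup L p Hbar S0) : Matrix (Fin L) (Fin L) ℂ :=
  Matrix.of fun a b => (S.Qbar * (EL (p+1) L * S0)) ((Fin.last p), a) b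

/-- `C_j := Q_j^{(11)} C̃_j`. -/
def C (S : QRSetup L p Hbar S0) : Matrix (Fin L) (Fin L) ℂ := S.Q11 * S.Ct

/-- `Ĉ_j := Q̂_j^{(b)} C̃_j`. -/
def Chat (S : QRSetup L p Hbar S0) : Matrix (Fin L) (Fin L) ℂ := S.Qhatb * S.Ct

end QRSetup

/-! The unitary `Q_j diag(Q̄_{j-1}, I_L)` turns the `j`-th least-squares problem into the block
upper triangular system `[[R, Z], [0, N]] Y = [R Y_{j-1}; C_j]`, so
`Y_j = [Y_{j-1} - R⁻¹ Z N⁻¹ C_j; N⁻¹ C_j]` and `X_j - X_{j-1} = W_j [-R⁻¹ Z; I] N⁻¹ C_j`.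
Since `W_j` has orthonormal columns and `N` is invertible, a column of `X_j - X_{j-1}` vanishes
exactly when the same column of `C_j` does. The rank bound holds because `C_j` then has at
least `|𝕀|` zero columns. -/

section Columns
variable {K κ μ ι : Type*} [Semiring K] [Fintype κ]

lemma mul_col_eq_zero (P : Matrix μ κ K) {C : Matrix κ ι K} {i : ι} (h : ∀ a, C a i = 0)
    (r : μ) : (P * C) r i = 0 := by
  simp only [Matrix.mul_apply, h, mul_zero, Finset.sum_const_zero]

lemma mul_col_eq_zero_iff_of_mul_eq_one [Fintype μ] [DecidableEq κ] {G : Matrix κ μ K}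
    {P : Matrix μ κ K} (hGP : G * P = 1) (C : Matrix κ ι K) (i : ι) :
    (∀ r, (P * C) r i = 0) ↔ ∀ a, C a i = 0 := by
  refine ⟨fun h a => ?_, mul_col_eq_zero P⟩
  rw [← Matrix.one_mul C, ← hGP, Matrix.mul_assoc]
  exact mul_col_eq_zero G h a

end Columns

section Rank
variable {K μ ι : Type*} [Field K] [Fintype μ] [Fintype ι]

lemma rank_pos_of_ne_zero {M : Matrix μ ι K} (hM : M ≠ 0) : 0 < M.rank := by
  refine Nat.pos_of_ne_zero fun h => hM ?_
  rw [Matrix.rank_eq_finrank_span_cols, Submodule.finrank_eq_zero, Submodule.span_eq_bot] at h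
  ext a i
  exact congrFun (h _ ⟨i, rfl⟩) a

lemma rank_le_card_sub_of_col_eq_zero [DecidableEq ι] {M : Matrix μ ι K}
    (I : Finset ι) (h : ∀ i ∈ I, ∀ a, M a i = 0) : M.rank ≤ Fintype.card ι - I.card := by
  rw [← Matrix.rank_transpose, ← Finset.card_compl]
  refine Matrix.rank_le_card_of_support_subset _ _ fun i hi => ?_
  by_contra hI
  exact hi (funext fun a => h i (by simpa using hI) a)

end Rank

section BlockMatrices

variable {m L : ℕ} {ι : Type*}

@[simp] lemma vcat_castSucc (T : Matrix (Fin m × Fin L) ι ℂ) (B : Matrix (Fin L) ι ℂ)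
    (k : Fin m) (a : Fin L) (c : ι) : vcat T B (k.castSucc, a) c = T (k, a) c := by
  simp [vcat]

@[simp] lemma vcat_last (T : Matrix (Fin m × Fin L) ι ℂ) (B : Matrix (Fin L) ι ℂ)
    (a : Fin L) (c : ι) : vcat T B (Fin.last m, a) c = B a c := by
  simp [vcat]

lemma blockRow_ext {M M' : Matrix (Fin (m+1) × Fin L) ι ℂ}
    (htop : ∀ k a c, M (Fin.castSucc k, a) c = M' (k.castSucc, a) c)
    (hbot : ∀ a c, M (Fin.last m, a) c = M' (Fin.last m, a) c) : M = M' := by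
  ext ⟨r, a⟩ c
  rcases Fin.eq_castSucc_or_eq_last r with ⟨r, rfl⟩ | rfl
  exacts [htop r a c, hbot a c]

lemma vcat_mul {κ : Type*} [Fintype ι] (T : Matrix (Fin m × Fin L) ι ℂ)
    (B : Matrix (Fin L) ι ℂ) (M : Matrix ι κ ℂ) : vcat T B * M = vcat (T * M) (B * M) :=
  blockRow_ext (by simp [Matrix.mul_apply]) (by simp [Matrix.mul_apply])

lemma vcat_sub (T T' : Matrix (Fin m × Fin L) ι ℂ) (B B' : Matrix (Fin L) ι ℂ) :
    vcat T B - vcat T' B' = vcat (T - T') (B - B') :=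
  blockRow_ext (by simp) (by simp)

lemma mul_vcat {κ : Type*} (M : Matrix κ (Fin (m+1) × Fin L) ℂ) (T : Matrix (Fin m × Fin L) ι ℂ)
    (B : Matrix (Fin L) ι ℂ) :
    M * vcat T B = M.submatrix id (Prod.map Fin.castSucc id) * T
      + M.submatrix id (fun a => (Fin.last m, a)) * B := by
  ext r c
  simp [Matrix.mul_apply, Fintype.sum_prod_type, Fin.sum_univ_castSucc]

lemma twoBlock_mul_vcat (R : Matrix (Fin m × Fin L) (Fin m × Fin L) ℂ)
    (Z : Matrix (Fin m × Fin L) (Fin L) ℂ) (N : Matrix (Fin L) (Fin L) ℂ)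
    (T : Matrix (Fin m × Fin L) ι ℂ) (B : Matrix (Fin L) ι ℂ) :
    twoBlock R Z N * vcat T B = vcat (R * T + Z * B) (N * B) := by
  refine blockRow_ext ?_ ?_ <;>
  simp [Matrix.mul_apply, Fintype.sum_prod_type, Fin.sum_univ_castSucc, twoBlock]

lemma extendOne_mul_vcat (Q : Matrix (Fin m × Fin L) (Fin m × Fin L) ℂ)
    (T : Matrix (Fin m × Fin L) ι ℂ) (B : Matrix (Fin L) ι ℂ) :
    extendOne Q * vcat T B = vcat (Q * T) B := by
  refine blockRow_ext ?_ ?_ <;>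
  simp [Matrix.mul_apply, Fintype.sum_prod_type, Fin.sum_univ_castSucc, extendOne]

lemma trailingTwo_mul_vcat_vcat (Q11 Q12 Q21 Q22 : Matrix (Fin L) (Fin L) ℂ)
    (T : Matrix (Fin m × Fin L) ι ℂ) (U V : Matrix (Fin L) ι ℂ) :
    trailingTwo (m := m) Q11 Q12 Q21 Q22 * vcat (vcat T U) V
      = vcat (vcat T (Q11 * U + Q12 * V)) (Q21 * U + Q22 * V) := by
  refine blockRow_ext (fun k a c => ?_) ?_
  · rcases Fin.eq_castSucc_or_eq_last k with ⟨k, rfl⟩ | rfl <;>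
    simp [Matrix.mul_apply, Fintype.sum_prod_type, Fin.sum_univ_castSucc, trailingTwo,
      (Fin.castSucc_ne_last _).symm]
  · simp [Matrix.mul_apply, Fintype.sum_prod_type, Fin.sum_univ_castSucc, trailingTwo,
      (Fin.castSucc_ne_last _).symm]

lemma EL_succ_succ : EL (m+2) L = vcat (EL (m+1) L) 0 :=
  blockRow_ext (by simp [EL]) (by simp [EL])

lemma stackZero_eq_vcat (R : Matrix (Fin m × Fin L) (Fin m × Fin L) ℂ) :
    stackZero R = vcat R 0 :=
  blockRow_ext (by simp [stackZero]) (by simp [stackZero])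

lemma threeBlock_zero_eq_vcat (R : Matrix (Fin m × Fin L) (Fin m × Fin L) ℂ)
    (Z : Matrix (Fin m × Fin L) (Fin L) ℂ) (N : Matrix (Fin L) (Fin L) ℂ) :
    threeBlock R Z N 0 = vcat (twoBlock R Z N) 0 := by
  refine blockRow_ext (fun k a c => ?_) (by simp [threeBlock])
  rcases Fin.eq_castSucc_or_eq_last k with ⟨k, rfl⟩ | rfl <;>
    simp [threeBlock, twoBlock]

lemma conjTranspose_extendOne_mul_extendOne (P Q : Matrix (Fin m × Fin L) (Fin m × Fin L) ℂ) :
    (extendOne P)ᴴ * extendOne Q = extendOne (Pᴴ * Q) := by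
  ext ⟨r, a⟩ ⟨c, b⟩
  rcases Fin.eq_castSucc_or_eq_last r with ⟨r, rfl⟩ | rfl <;>
  rcases Fin.eq_castSucc_or_eq_last c with ⟨c, rfl⟩ | rfl <;>
  simp [Matrix.mul_apply, Fintype.sum_prod_type, Fin.sum_univ_castSucc, extendOne, eq_comm]

lemma extendOne_one : extendOne (1 : Matrix (Fin m × Fin L) (Fin m × Fin L) ℂ) = 1 := by
  ext ⟨r, a⟩ ⟨c, b⟩
  rcases Fin.eq_castSucc_or_eq_last r with ⟨r, rfl⟩ | rfl <;>
  rcases Fin.eq_castSucc_or_eq_last c with ⟨c, rfl⟩ | rfl <;>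
  simp [extendOne, Matrix.one_apply, (Fin.castSucc_ne_last _).symm, Fin.castSucc_ne_last,
    Fin.val_inj]

def topRows (M : Matrix (Fin (m+1) × Fin L) ι ℂ) : Matrix (Fin m × Fin L) ι ℂ :=
  M.submatrix (Prod.map Fin.castSucc id) id

lemma vcat_topRows (M : Matrix (Fin (m+1) × Fin L) ι ℂ) :
    vcat (topRows M) (Matrix.of fun a c => M (Fin.last m, a) c) = M :=
  blockRow_ext (by simp [topRows]) (by simp)

lemma submatrix_castSucc_mul {κ : Type*} [Fintype ι] (M : Matrix κ (Fin (m+1) × Fin L) ℂ)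
    (Y : Matrix (Fin m × Fin L) ι ℂ) :
    M.submatrix id (Prod.map Fin.castSucc id) * Y = M * vcat Y 0 := by
  simp [mul_vcat]

lemma vcat_mul_col_eq_zero_iff (X : Matrix (Fin m × Fin L) (Fin L) ℂ)
    (M : Matrix (Fin L) ι ℂ) (i : ι) :
    (∀ r, vcat (X * M) M r i = 0) ↔ ∀ a, M a i = 0 := by
  refine ⟨fun h a => by simpa using h (Fin.last m, a), fun h => ?_⟩
  rintro ⟨r, a⟩
  rcases Fin.eq_castSucc_or_eq_last r with ⟨r, rfl⟩ | rfl
  · simpa using mul_col_eq_zero X h (r, a)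
  · simpa using h a

end BlockMatrices

section Frobenius
variable {μ ι : Type*} [Fintype μ] [Fintype ι]

lemma frobSq_nonneg (M : Matrix μ ι ℂ) : 0 ≤ frobSq M :=
  Finset.sum_nonneg fun _ _ => Finset.sum_nonneg fun _ _ => Complex.normSq_nonneg _

@[simp] lemma frobSq_zero : frobSq (0 : Matrix μ ι ℂ) = 0 := by
  simp [frobSq]

@[simp] lemma frobSq_neg (M : Matrix μ ι ℂ) : frobSq (-M) = frobSq M := by
  simp [frobSq]

lemma frobSq_eq_re_trace (M : Matrix μ ι ℂ) : frobSq M = (Mᴴ * M).trace.re := by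
  simp only [frobSq, Matrix.trace, Matrix.diag, Matrix.mul_apply, Matrix.conjTranspose_apply,
    Complex.re_sum]
  rw [Finset.sum_comm]
  refine Finset.sum_congr rfl fun _ _ => Finset.sum_congr rfl fun _ _ => ?_
  simp [Complex.normSq_apply, Complex.mul_re, RCLike.star_def]

lemma frobSq_unitary_mul [DecidableEq μ] {Q : Matrix μ μ ℂ} (hQ : Qᴴ * Q = 1)
    (M : Matrix μ ι ℂ) :
    frobSq (Q * M) = frobSq M := by
  rw [frobSq_eq_re_trace, frobSq_eq_re_trace, Matrix.conjTranspose_mul, Matrix.mul_assoc,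
    ← Matrix.mul_assoc Qᴴ, hQ, Matrix.one_mul]

lemma frobSq_vcat {m L : ℕ} (T : Matrix (Fin m × Fin L) ι ℂ) (B : Matrix (Fin L) ι ℂ) :
    frobSq (vcat T B) = frobSq T + frobSq B := by
  simp [frobSq, Fintype.sum_prod_type, Fin.sum_univ_castSucc]

end Frobenius

lemma IsUniqueFrobMin.eq_of_unitary_mul_eq {m L : ℕ} {κ ι : Type*} [Fintype κ] [Fintype ι]
    {H : Matrix (Fin (m+1) × Fin L) κ ℂ} {T : Matrix (Fin (m+1) × Fin L) ι ℂ} {Y : Matrix κ ι ℂ}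
    (hY : IsUniqueFrobMin H T Y) {Q : Matrix (Fin (m+1) × Fin L) (Fin (m+1) × Fin L) ℂ}
    (hQ : Qᴴ * Q = 1) {B : Matrix (Fin m × Fin L) κ ℂ} {G : Matrix (Fin m × Fin L) ι ℂ}
    {E : Matrix (Fin L) ι ℂ} (hQH : Q * H = vcat B 0) (hQT : Q * T = vcat G E)
    {Y₀ : Matrix κ ι ℂ} (hY₀ : B * Y₀ = G) : Y = Y₀ := by
  -- the binders of `IsUniqueFrobMin` elaborate at `CStarMatrix`, hence the ascriptions below
  have hsplit : ∀ Y' : Matrix κ ι ℂ, frobSq (H * Y' - T) = frobSq (B * Y' - G) + frobSq E :=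
    fun Y' => by
      rw [← frobSq_unitary_mul hQ, Matrix.mul_sub, ← Matrix.mul_assoc, hQH, hQT, vcat_mul,
        vcat_sub, frobSq_vcat, Matrix.zero_mul, zero_sub, frobSq_neg]
  have hmin : ∀ Y' : Matrix κ ι ℂ, frobSq (H * Y₀ - T) ≤ frobSq (H * Y' - T) := fun Y' => by
    rw [hsplit, hsplit, hY₀, sub_self, frobSq_zero]
    linarith [frobSq_nonneg (B * Y' - G)]
  exact (hY.2 Y₀ hmin).symm

namespace QRSetup

variable {L p : ℕ} {Hbar : Matrix (Fin (p+2) × Fin L) (Fin (p+1) × Fin L) ℂ}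
  {S0 : Matrix (Fin L) (Fin L) ℂ} (S : QRSetup L p Hbar S0)

lemma R_mul_eq_topRows {Yprev : Matrix (Fin p × Fin L) (Fin L) ℂ}
    (hYprev : IsUniqueFrobMin (Hbar.submatrix (Prod.map Fin.castSucc id)
      (Prod.map Fin.castSucc id)) (EL (p+1) L * S0) Yprev) :
    S.R * Yprev = topRows (S.Qbar * (EL (p+1) L * S0)) := by
  have hR : IsUnit S.R.det := (Matrix.isUnit_iff_isUnit_det _).mp S.R_inv
  rw [hYprev.eq_of_unitary_mul_eq S.Qbar_unit (S.qr_prev.trans (stackZero_eq_vcat _))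
    (vcat_topRows _).symm (Matrix.mul_nonsing_inv_cancel_left _ _ hR),
    Matrix.mul_nonsing_inv_cancel_left _ _ hR]

/-- `Q_j diag(Q̄_{j-1}, I_L)`, the unitary factor of the QR factorization of `H̄_j`. -/
def Qfull : Matrix (Fin (p+2) × Fin L) (Fin (p+2) × Fin L) ℂ :=
  trailingTwo (m := p) S.Q11 S.Q12 S.Q21 S.Q22 * extendOne S.Qbar

lemma Qfull_unitary : S.Qfullᴴ * S.Qfull = 1 := by
  rw [Qfull, Matrix.conjTranspose_mul, Matrix.mul_assoc,
    ← Matrix.mul_assoc _ (trailingTwo _ _ _ _), S.Qj_unit, Matrix.one_mul,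
    conjTranspose_extendOne_mul_extendOne, S.Qbar_unit, extendOne_one]

lemma Qfull_mul_Hbar : S.Qfull * Hbar = vcat (twoBlock S.R S.Z S.N) 0 := by
  rw [Qfull, Matrix.mul_assoc, S.qr_full, threeBlock_zero_eq_vcat]

lemma Qfull_mul_rhs :
    S.Qfull * (EL (p+2) L * S0)
      = vcat (vcat (topRows (S.Qbar * (EL (p+1) L * S0))) S.C) (S.Q21 * S.Ct) := by
  rw [Qfull, EL_succ_succ, vcat_mul, Matrix.zero_mul, Matrix.mul_assoc, extendOne_mul_vcat]
  conv_lhs => rw [← vcat_topRows (S.Qbar * _), trailingTwo_mul_vcat_vcat]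
  simp [C, Ct]

lemma eq_vcat_of_isUniqueFrobMin {Yj : Matrix (Fin (p+1) × Fin L) (Fin L) ℂ}
    {Yprev : Matrix (Fin p × Fin L) (Fin L) ℂ}
    (hYj : IsUniqueFrobMin Hbar (EL (p+2) L * S0) Yj)
    (hYprev : IsUniqueFrobMin (Hbar.submatrix (Prod.map Fin.castSucc id)
      (Prod.map Fin.castSucc id)) (EL (p+1) L * S0) Yprev) :
    Yj = vcat (Yprev - S.R⁻¹ * S.Z * (S.N⁻¹ * S.C)) (S.N⁻¹ * S.C) := by
  have hR : IsUnit S.R.det := (Matrix.isUnit_iff_isUnit_det _).mp S.R_inv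
  have hN : IsUnit S.N.det := (Matrix.isUnit_iff_isUnit_det _).mp S.N_inv
  refine hYj.eq_of_unitary_mul_eq S.Qfull_unitary S.Qfull_mul_Hbar S.Qfull_mul_rhs ?_
  rw [twoBlock_mul_vcat, Matrix.mul_nonsing_inv_cancel_left _ _ hN, Matrix.mul_sub,
    Matrix.mul_assoc, Matrix.mul_nonsing_inv_cancel_left _ _ hR, sub_add_cancel,
    S.R_mul_eq_topRows hYprev]

end QRSetup

namespace BlockArnoldi

variable {n L p : ℕ} (D : BlockArnoldi n L p)

lemma conjTranspose_Wfull_mul_Wfull : D.Wfullᴴ * D.Wfull = 1 := by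
  rw [Wfull, conjTranspose_submatrix, ← submatrix_mul _ _ _ _ _ Function.bijective_id, D.orth]
  exact submatrix_one _ ((Fin.castSucc_injective _).prodMap Function.injective_id)

lemma col_eq_iff_col_C_eq_zero (S : QRSetup L p D.Hbar D.S0)
    {Yj : Matrix (Fin (p+1) × Fin L) (Fin L) ℂ} (hYj : IsBlockGMRESj D Yj)
    {Yprev : Matrix (Fin p × Fin L) (Fin L) ℂ} (hYprev : IsBlockGMRESprev D Yprev) (i : Fin L) :
    (∀ r, (D.X0 + D.Wfull * Yj) r i = (D.X0 + D.Wprev * Yprev) r i) ↔ ∀ a, S.C a i = 0 := by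
  have hN : IsUnit S.N.det := (Matrix.isUnit_iff_isUnit_det _).mp S.N_inv
  have hdiff : D.X0 + D.Wfull * Yj - (D.X0 + D.Wprev * Yprev)
      = D.Wfull * vcat (-(S.R⁻¹ * S.Z) * (S.N⁻¹ * S.C)) (S.N⁻¹ * S.C) := by
    rw [add_sub_add_left_eq_sub, show D.Wprev = D.Wfull.submatrix id (Prod.map Fin.castSucc id)
      from rfl, submatrix_castSucc_mul, ← Matrix.mul_sub, S.eq_vcat_of_isUniqueFrobMin hYj hYprev,
      vcat_sub, sub_sub_cancel_left, sub_zero, Matrix.neg_mul]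
  calc (∀ r, (D.X0 + D.Wfull * Yj) r i = (D.X0 + D.Wprev * Yprev) r i)
      ↔ ∀ r, (D.Wfull * vcat (-(S.R⁻¹ * S.Z) * (S.N⁻¹ * S.C)) (S.N⁻¹ * S.C)) r i = 0 := by
        simp only [← hdiff, Matrix.sub_apply, sub_eq_zero]
    _ ↔ ∀ r, vcat (-(S.R⁻¹ * S.Z) * (S.N⁻¹ * S.C)) (S.N⁻¹ * S.C) r i = 0 :=
        mul_col_eq_zero_iff_of_mul_eq_one D.conjTranspose_Wfull_mul_Wfull _ i
    _ ↔ ∀ a, (S.N⁻¹ * S.C) a i = 0 := vcat_mul_col_eq_zero_iff _ _ i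
    _ ↔ ∀ a, S.C a i = 0 := mul_col_eq_zero_iff_of_mul_eq_one (Matrix.mul_nonsing_inv _ hN) _ i

end BlockArnoldi

/-- For each `i`, the `i`-th column of `X_j^(G)` equals the `i`-th
column of `X_{j-1}^(G)` iff the `i`-th column of `C_j` is zero.  Consequently, block
GMRES partially stagnates at step `j` on a nonempty proper index set `𝕀` iff
`C_j ≠ 0`, the columns of `C_j` indexed by `𝕀` vanish and those outside `𝕀` do not;
in this case `0 < rank C_j ≤ L - |𝕀|`. -/
theorem stmt15 {n L p : ℕ} (D : BlockArnoldi n L p) (S : QRSetup L p D.Hbar D.S0)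
    (Yj : Matrix (Fin (p+1) × Fin L) (Fin L) ℂ) (hYj : IsBlockGMRESj D Yj)
    (Yprev : Matrix (Fin p × Fin L) (Fin L) ℂ) (hYprev : IsBlockGMRESprev D Yprev) :
    ∀ Xj : Matrix (Fin n) (Fin L) ℂ, Xj = D.X0 + D.Wfull * Yj →
    ∀ Xp : Matrix (Fin n) (Fin L) ℂ, Xp = D.X0 + D.Wprev * Yprev →
    (∀ i : Fin L, (∀ rr, Xj rr i = Xp rr i) ↔ (∀ a : Fin L, S.C a i = 0)) ∧
    (∀ I : Finset (Fin L), I.Nonempty → I ≠ Finset.univ →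
      (((∀ i ∈ I, ∀ rr, Xj rr i = Xp rr i) ∧ (∀ i ∉ I, ∃ rr, Xj rr i ≠ Xp rr i)) ↔
        (S.C ≠ 0 ∧ (∀ i ∈ I, ∀ a : Fin L, S.C a i = 0) ∧
          (∀ i ∉ I, ∃ a : Fin L, S.C a i ≠ 0))) ∧
      (((∀ i ∈ I, ∀ rr, Xj rr i = Xp rr i) ∧ (∀ i ∉ I, ∃ rr, Xj rr i ≠ Xp rr i)) →
        0 < S.C.rank ∧ S.C.rank ≤ L - I.card)) := by
  rintro Xj rfl Xp rfl
  have hcol := D.col_eq_iff_col_C_eq_zero S hYj hYprev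
  have hmoved : ∀ i, (∃ r, (D.X0 + D.Wfull * Yj) r i ≠ (D.X0 + D.Wprev * Yprev) r i)
      ↔ ∃ a, S.C a i ≠ 0 := fun i => by
    simpa only [not_forall] using not_congr (hcol i)
  refine ⟨hcol, fun I _ hI => ?_⟩
  obtain ⟨i₀, hi₀⟩ : ∃ i₀, i₀ ∉ I := by simpa [Finset.eq_univ_iff_forall] using hI
  have hC : (∀ i ∉ I, ∃ a, S.C a i ≠ 0) → S.C ≠ 0 := fun h h0 => by
    obtain ⟨a, ha⟩ := h i₀ hi₀
    exact ha (by simp [h0])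
  simp only [hcol, hmoved]
  refine ⟨⟨fun h => ⟨hC h.2, h⟩, fun h => h.2⟩, fun h => ⟨rank_pos_of_ne_zero (hC h.2), ?_⟩⟩
  simpa using rank_le_card_sub_of_col_eq_zero I h.1

end
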